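/- There exists a constant C > 0, depending only on θ, η and T, such that for all 0 < δ ≤ 1 and all integers 1 ≤ n ≤ T/δ, the EKF0 variance recursion of the Gaussian mixture SDE filter satisfies |p_n − n·η²·δ³/12| ≤ C·n·δ⁵. -/

import Mathlib

open Matrix MeasureTheory Real

noncomputable section

/-- Drift matrix `F = [[0, 1], [0, −θ]]` of the integrated Ornstein–Uhlenbeck prior. -/
def Fmat (θ : ℝ) : Matrix (Fin 2) (Fin 2) ℝ := !![0, 1; 0, -θ]

/-- Diffusion column vector `L = (0, η)ᵀ`. -/
def Lmat (η : ℝ) : Matrix (Fin 2) (Fin 1) ℝ := !![0; η]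

/-- Noise covariance `Q(δ) = ∫₀^δ exp(sF)·L·Lᵀ·exp(sFᵀ) ds` (entrywise Bochner integral). -/
def Qmat (θ η δ : ℝ) : Matrix (Fin 2) (Fin 2) ℝ :=
  Matrix.of fun i j => ∫ s in (0:ℝ)..δ,
    (NormedSpace.exp (s • Fmat θ) * (Lmat η * (Lmat η)ᵀ) *
      NormedSpace.exp (s • (Fmat θ)ᵀ)) i j


/-- Transition matrix `A(δ) = exp(δF)`. -/
def Amat (θ δ : ℝ) : Matrix (Fin 2) (Fin 2) ℝ := NormedSpace.exp (δ • Fmat θ)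

/-- Observation row vector `H₁ = (0, 1)`. -/
def H1row : Matrix (Fin 1) (Fin 2) ℝ := !![0, 1]

/-- Variance recursion of the Gaussian mixture SDE filter (Algorithm 3, EKF0, zero
measurement noise): `p₀ = 0` and `p_{k+1} = ((I₂ − K_k·H₁)·P⁻_k)₀,₀`, where
`P⁻_k = A(δ)·diag(p_k, 0)·A(δ)ᵀ + Q(δ)` and `K_k = P⁻_k·H₁ᵀ·(H₁·P⁻_k·H₁ᵀ)⁻¹`. -/
def pvar (θ η δ : ℝ) : ℕ → ℝ
  | 0 => 0
  | k + 1 =>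
    let Pm : Matrix (Fin 2) (Fin 2) ℝ :=
      Amat θ δ * Matrix.diagonal ![pvar θ η δ k, 0] * (Amat θ δ)ᵀ + Qmat θ η δ
    (((1 : Matrix (Fin 2) (Fin 2) ℝ) - Pm * H1rowᵀ * (H1row * Pm * H1rowᵀ)⁻¹ * H1row) * Pm) 0 0

/-!
Since `F² = -θF`, the exponential is `exp(sF) = [[1, φ(s)], [0, e^{-θs}]]` with
`φ(s) = ∫₀^s e^{-θu} du`. Hence `A(δ)` has first column `(1, 0)ᵀ`, `Q(δ) = η² G(δ)` for the Gram
matrix `G(δ)` of `φ` and `e^{-θs}` on `[0, δ]`, and the update `((I - KH)P⁻)₀₀` is the Schur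
complement `P⁻₀₀ - P⁻₀₁P⁻₁₀/P⁻₁₁`, which `A diag(p, 0) Aᵀ` merely shifts by `p`. So
`p_n = n η² (G₀₀ - G₀₁²/G₁₁)` exactly. Expanding to second order,
`G₀₀ = δ³/3 - θδ⁴/4 + O(δ⁵)`, `G₀₁ = δ²/2 - θδ³/2 + O(δ⁴)`, `G₁₁ = δ - θδ² + O(δ³)`, and the terms
linear in `θ` cancel in the Schur complement, which is therefore `δ³/12 + O(δ⁵)` because
`G₁₁ ≥ e^{-2|θ|} δ`.
-/

open scoped Nat
open Filter Asymptotics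

theorem Real.summable_pow_div_factorial_succ (a : ℝ) :
    Summable fun n : ℕ => a ^ n / (n + 1)! := by
  refine .of_norm_bounded (Real.summable_pow_div_factorial |a|) fun n => ?_
  rw [norm_div, norm_pow, Real.norm_eq_abs, Real.norm_natCast]
  gcongr
  exact n.le_succ

theorem Real.mul_tsum_pow_div_factorial_succ (a : ℝ) :
    a * ∑' n : ℕ, a ^ n / (n + 1)! = Real.exp a - 1 := by
  rw [← tsum_mul_left, Real.exp_eq_exp_ℝ, congrFun NormedSpace.exp_eq_tsum_div a,
    (Real.summable_pow_div_factorial a).tsum_eq_zero_add]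
  simp [← mul_div_assoc, ← pow_succ']

section MulSelfEqSmul

variable {A : Type*} [Ring A] [Algebra ℝ A]

theorem pow_succ_eq_smul_of_mul_self_eq_smul {x : A} {a : ℝ} (h : x * x = a • x) (n : ℕ) :
    x ^ (n + 1) = a ^ n • x := by
  induction n with
  | zero => simp
  | succ n ih => rw [pow_succ, ih, smul_mul_assoc, h, smul_smul, pow_succ]

theorem NormedSpace.exp_eq_one_add_smul_of_mul_self_eq_smul [TopologicalSpace A]
    [IsTopologicalRing A] [ContinuousSMul ℝ A] [T2Space A] {x : A} {a : ℝ} (h : x * x = a • x) :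
    NormedSpace.exp x = 1 + (∑' n : ℕ, a ^ n / (n + 1)!) • x := by
  have hshift : ∀ n : ℕ, ((n + 1)! : ℝ)⁻¹ • x ^ (n + 1) = (a ^ n / (n + 1)!) • x := fun n => by
    rw [pow_succ_eq_smul_of_mul_self_eq_smul h, smul_smul, inv_mul_eq_div]
  have hsum : Summable fun n : ℕ => ((n ! : ℝ))⁻¹ • x ^ n :=
    (summable_nat_add_iff 1).mp <| by
      simpa only [hshift] using (Real.summable_pow_div_factorial_succ a).smul_const x
  rw [congrFun (NormedSpace.exp_eq_tsum ℝ) x, hsum.tsum_eq_zero_add]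
  simp only [hshift, (Real.summable_pow_div_factorial_succ a).tsum_smul_const]
  simp

end MulSelfEqSmul

def expNegPrimitive (θ s : ℝ) : ℝ := ∫ u in (0:ℝ)..s, Real.exp (-(θ * u))

theorem mul_expNegPrimitive (θ s : ℝ) : θ * expNegPrimitive θ s = 1 - Real.exp (-(θ * s)) := by
  have hderiv : ∀ u ∈ Set.uIcc 0 s,
      HasDerivAt (fun u => -Real.exp (-(θ * u))) (θ * Real.exp (-(θ * u))) u := fun u _ =>
    (((hasDerivAt_id' u).const_mul θ).neg.exp.neg).congr_deriv (by simp; ring)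
  rw [expNegPrimitive, ← intervalIntegral.integral_const_mul,
    intervalIntegral.integral_eq_sub_of_hasDerivAt hderiv
      (Continuous.intervalIntegrable (by fun_prop) _ _)]
  simp only [mul_zero, neg_zero, Real.exp_zero]
  ring

theorem expNegPrimitive_zero_left (s : ℝ) : expNegPrimitive 0 s = s := by
  simp [expNegPrimitive]

theorem Fmat_mul_self (θ : ℝ) : Fmat θ * Fmat θ = (-θ) • Fmat θ := by
  ext i j
  fin_cases i <;> fin_cases j <;> simp [Fmat]

theorem exp_smul_Fmat (θ s : ℝ) :
    NormedSpace.exp (s • Fmat θ) = !![1, expNegPrimitive θ s; 0, Real.exp (-(θ * s))] := by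
  have hsq : (s • Fmat θ) * (s • Fmat θ) = (-θ * s) • (s • Fmat θ) := by
    rw [smul_mul_smul_comm, Fmat_mul_self, smul_smul, smul_smul]
    ring_nf
  have hdiag : (-θ * s) * ∑' n : ℕ, (-θ * s) ^ n / (n + 1)! = Real.exp (-(θ * s)) - 1 := by
    rw [Real.mul_tsum_pow_div_factorial_succ]; ring_nf
  have hcorner : (∑' n : ℕ, (-θ * s) ^ n / (n + 1)!) * s = expNegPrimitive θ s := by
    rcases eq_or_ne θ 0 with rfl | hθ
    · rw [expNegPrimitive_zero_left, tsum_eq_single 0 fun n hn => by simp [hn]]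
      simp
    · refine mul_left_cancel₀ hθ ?_
      rw [mul_expNegPrimitive]
      linear_combination -hdiag
  rw [NormedSpace.exp_eq_one_add_smul_of_mul_self_eq_smul hsq]
  generalize (∑' n : ℕ, (-θ * s) ^ n / (n + 1)!) = c at hdiag hcorner
  ext i j
  fin_cases i <;> fin_cases j <;> simp [Fmat, ← hcorner]
  linear_combination hdiag

def schurCompl (P : Matrix (Fin 2) (Fin 2) ℝ) : ℝ := P 0 0 - P 0 1 * P 1 0 / P 1 1

theorem schurCompl_smul (c : ℝ) (P : Matrix (Fin 2) (Fin 2) ℝ) :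
    schurCompl (c • P) = c * schurCompl P := by
  rcases eq_or_ne c 0 with rfl | hc
  · simp [schurCompl]
  · simp only [schurCompl, Matrix.smul_apply, smul_eq_mul]
    rw [mul_mul_mul_comm, mul_assoc, mul_div_mul_left _ _ hc, mul_div_assoc]
    ring

theorem kalmanUpdate_apply_zero_zero (P : Matrix (Fin 2) (Fin 2) ℝ) :
    (((1 : Matrix (Fin 2) (Fin 2) ℝ) - P * H1rowᵀ * (H1row * P * H1rowᵀ)⁻¹ * H1row) * P) 0 0 =
      schurCompl P := by
  have hinnov : H1row * P * H1rowᵀ = !![P 1 1] := by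
    ext i j
    fin_cases i; fin_cases j
    simp [H1row, Matrix.mul_apply, Matrix.vecMul, dotProduct]
  have hinv : (!![P 1 1] : Matrix (Fin 1) (Fin 1) ℝ)⁻¹ = !![(P 1 1)⁻¹] := by
    ext i j
    fin_cases i; fin_cases j
    simp [Ring.inverse_eq_inv']
  rw [hinnov, hinv]
  simp [schurCompl, H1row, Matrix.mul_apply, Fin.sum_univ_two, Matrix.one_apply]
  ring

theorem schurCompl_mul_diagonal_mul_transpose_add {A : Matrix (Fin 2) (Fin 2) ℝ}
    (h00 : A 0 0 = 1) (h10 : A 1 0 = 0) (p : ℝ) (P : Matrix (Fin 2) (Fin 2) ℝ) :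
    schurCompl (A * diagonal ![p, 0] * Aᵀ + P) = p + schurCompl P := by
  simp [schurCompl, Matrix.mul_apply, Fin.sum_univ_two, h00, h10]
  ring

def ouVec (θ s : ℝ) : Fin 2 → ℝ := ![expNegPrimitive θ s, Real.exp (-(θ * s))]

def ouGram (θ δ : ℝ) : Matrix (Fin 2) (Fin 2) ℝ :=
  of fun i j => ∫ s in (0:ℝ)..δ, ouVec θ s i * ouVec θ s j

theorem Qmat_eq_smul_ouGram (θ η δ : ℝ) : Qmat θ η δ = η ^ 2 • ouGram θ δ := by
  have hintegrand : ∀ s i j, (NormedSpace.exp (s • Fmat θ) * (Lmat η * (Lmat η)ᵀ) *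
      NormedSpace.exp (s • (Fmat θ)ᵀ)) i j = η ^ 2 * (ouVec θ s i * ouVec θ s j) := by
    intro s i j
    rw [← transpose_smul, Matrix.exp_transpose, exp_smul_Fmat]
    fin_cases i <;> fin_cases j <;>
      simp [Lmat, ouVec, Matrix.mul_apply, Fin.sum_univ_two, Matrix.vecMul, dotProduct] <;> ring
  ext i j
  simp only [Qmat, ouGram, of_apply, Matrix.smul_apply, smul_eq_mul, hintegrand,
    intervalIntegral.integral_const_mul]

theorem pvar_eq (θ η δ : ℝ) (n : ℕ) :
    pvar θ η δ n = n * (η ^ 2 * schurCompl (ouGram θ δ)) := by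
  have hA : Amat θ δ = !![1, expNegPrimitive θ δ; 0, Real.exp (-(θ * δ))] := exp_smul_Fmat θ δ
  induction n with
  | zero => simp [pvar]
  | succ k ih =>
    rw [pvar, kalmanUpdate_apply_zero_zero, schurCompl_mul_diagonal_mul_transpose_add
      (by simp [hA]) (by simp [hA]), Qmat_eq_smul_ouGram, schurCompl_smul, ih]
    push_cast
    ring

theorem isBigO_pow_of_le {k m : ℕ} (h : k ≤ m) :
    (fun s : ℝ => s ^ m) =O[𝓟 (Set.Icc 0 1)] fun s => s ^ k :=
  isBigO_principal.mpr ⟨1, fun s ⟨hs0, hs1⟩ => by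
    simpa [abs_pow, abs_of_nonneg hs0] using pow_le_pow_of_le_one hs0 hs1 h⟩

theorem Continuous.isBigO_pow_mul {h : ℝ → ℝ} (hh : Continuous h) (k : ℕ) :
    (fun s => s ^ k * h s) =O[𝓟 (Set.Icc 0 1)] fun s => s ^ k := by
  simpa using (isBigO_refl (fun s : ℝ => s ^ k) _).mul
    (hh.continuousOn.isBigO_principal isCompact_Icc (c := (1 : ℝ)) (by simp))

theorem isBigO_primitive {g : ℝ → ℝ} {k : ℕ} (hg : g =O[𝓟 (Set.Icc 0 1)] fun s => s ^ k) :
    (fun δ => ∫ s in (0:ℝ)..δ, g s) =O[𝓟 (Set.Icc 0 1)] fun δ => δ ^ (k + 1) := by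
  obtain ⟨c, hc0, hc⟩ := hg.exists_pos
  rw [isBigOWith_principal] at hc
  refine isBigO_principal.mpr ⟨c, fun δ ⟨hδ0, hδ1⟩ => ?_⟩
  have hbound : ∀ s ∈ Set.uIoc 0 δ, ‖g s‖ ≤ c * δ ^ k := fun s hs => by
    rw [Set.uIoc_of_le hδ0] at hs
    calc ‖g s‖ ≤ c * ‖s ^ k‖ := hc s ⟨hs.1.le, hs.2.trans hδ1⟩
      _ ≤ c * δ ^ k := by
        rw [norm_pow, Real.norm_of_nonneg hs.1.le]
        gcongr
        exacts [hs.1.le, hs.2]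
  calc ‖∫ s in (0:ℝ)..δ, g s‖ ≤ c * δ ^ k * |δ - 0| :=
        intervalIntegral.norm_integral_le_of_norm_le_const hbound
    _ = c * ‖δ ^ (k + 1)‖ := by
        rw [sub_zero, norm_pow, Real.norm_of_nonneg hδ0, abs_of_nonneg hδ0, pow_succ, mul_assoc]

theorem isBigO_integral_sub {g q Q : ℝ → ℝ} {k : ℕ} (hg : Continuous g) (hq : Continuous q)
    (hQ : ∀ δ, ∫ s in (0:ℝ)..δ, q s = Q δ)
    (h : (fun s => g s - q s) =O[𝓟 (Set.Icc 0 1)] fun s => s ^ k) :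
    (fun δ => (∫ s in (0:ℝ)..δ, g s) - Q δ) =O[𝓟 (Set.Icc 0 1)] fun δ => δ ^ (k + 1) :=
  (isBigO_primitive h).congr_left fun δ => by
    rw [intervalIntegral.integral_sub (hg.intervalIntegrable _ _) (hq.intervalIntegrable _ _), hQ]

theorem integral_mul_pow_sub_mul_pow (a b δ : ℝ) (k m : ℕ) :
    ∫ s in (0:ℝ)..δ, (a * s ^ k - b * s ^ m) =
      a * δ ^ (k + 1) / (k + 1) - b * δ ^ (m + 1) / (m + 1) := by
  rw [intervalIntegral.integral_sub
      ((by fun_prop : Continuous fun s : ℝ => a * s ^ k).intervalIntegrable _ _)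
      ((by fun_prop : Continuous fun s : ℝ => b * s ^ m).intervalIntegrable _ _),
    intervalIntegral.integral_const_mul, intervalIntegral.integral_const_mul,
    integral_pow, integral_pow]
  simp [mul_div_assoc]

theorem Asymptotics.IsBigO.mul_pow_add {α : Type*} {l : Filter α} {f g u : α → ℝ} {k m : ℕ}
    (hf : f =O[l] fun x => u x ^ k) (hg : g =O[l] fun x => u x ^ m) :
    (fun x => f x * g x) =O[l] fun x => u x ^ (k + m) :=
  (hf.mul hg).congr_right fun x => (pow_add (u x) k m).symm

section Expansions

variable (θ : ℝ)

-- A bootstrap: each expansion of `e^{-θs}` integrates to one of `φ = expNegPrimitive θ` an order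
-- higher, and `e^{-θs} = 1 - θ φ(s)` (`mul_expNegPrimitive`) turns that back into the next
-- expansion of `e^{-θs}`.

@[fun_prop]
theorem continuous_expNegPrimitive : Continuous (expNegPrimitive θ) :=
  intervalIntegral.continuous_primitive
    (fun a b => (by fun_prop : Continuous fun u => Real.exp (-(θ * u))).intervalIntegrable a b) 0

theorem expNeg_isBigO : (fun s => Real.exp (-(θ * s))) =O[𝓟 (Set.Icc 0 1)] fun s => s ^ 0 :=
  ((by fun_prop : Continuous fun s => Real.exp (-(θ * s))).isBigO_pow_mul 0).congr_left
    fun s => by simp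

theorem expNegPrimitive_isBigO : expNegPrimitive θ =O[𝓟 (Set.Icc 0 1)] fun s => s ^ 1 :=
  isBigO_primitive (expNeg_isBigO θ)

theorem expNeg_sub_one_isBigO :
    (fun s => Real.exp (-(θ * s)) - 1) =O[𝓟 (Set.Icc 0 1)] fun s => s ^ 1 :=
  ((expNegPrimitive_isBigO θ).const_mul_left (-θ)).congr_left fun s => by
    linear_combination (-1 : ℝ) * mul_expNegPrimitive θ s

theorem expNegPrimitive_sub_id_isBigO :
    (fun s => expNegPrimitive θ s - s) =O[𝓟 (Set.Icc 0 1)] fun s => s ^ 2 :=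
  isBigO_integral_sub (by fun_prop) continuous_const (fun δ => by simp) (expNeg_sub_one_isBigO θ)

theorem expNeg_sub_linear_isBigO :
    (fun s => Real.exp (-(θ * s)) - (1 - θ * s)) =O[𝓟 (Set.Icc 0 1)] fun s => s ^ 2 :=
  ((expNegPrimitive_sub_id_isBigO θ).const_mul_left (-θ)).congr_left fun s => by
    linear_combination (-1 : ℝ) * mul_expNegPrimitive θ s

theorem expNegPrimitive_sub_quadratic_isBigO :
    (fun s => expNegPrimitive θ s - (s - θ * s ^ 2 / 2)) =O[𝓟 (Set.Icc 0 1)] fun s => s ^ 3 :=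
  isBigO_integral_sub (by fun_prop) (by fun_prop)
    (fun δ => by convert integral_mul_pow_sub_mul_pow 1 θ δ 0 1 using 1 <;> norm_num)
    (expNeg_sub_linear_isBigO θ)

theorem ouGram_zero_zero_isBigO :
    (fun δ => ouGram θ δ 0 0 - (δ ^ 3 / 3 - θ * δ ^ 4 / 4)) =O[𝓟 (Set.Icc 0 1)]
      fun δ => δ ^ 5 := by
  have ha := expNegPrimitive_sub_quadratic_isBigO θ
  have hp : (fun s => s - θ * s ^ 2 / 2) =O[𝓟 (Set.Icc 0 1)] fun s => s ^ 1 :=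
    ((by fun_prop : Continuous fun s : ℝ => 1 - θ * s / 2).isBigO_pow_mul 1).congr_left
      fun s => by ring
  have hrem := (continuous_const (y := θ ^ 2 / 4)).isBigO_pow_mul 4
  have hintegrand := ((ha.mul_pow_add (expNegPrimitive_isBigO θ)).add
    ((hp.mul_pow_add ha).add hrem)).congr_left
      (f₂ := fun s => expNegPrimitive θ s * expNegPrimitive θ s - (s ^ 2 - θ * s ^ 3))
      fun s => by ring
  exact isBigO_integral_sub (g := fun s => expNegPrimitive θ s * expNegPrimitive θ s)
    (by fun_prop) (by fun_prop)
    (fun δ => by convert integral_mul_pow_sub_mul_pow 1 θ δ 2 3 using 1 <;> norm_num)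
    hintegrand

theorem ouGram_zero_one_isBigO :
    (fun δ => ouGram θ δ 0 1 - (δ ^ 2 / 2 - θ * δ ^ 3 / 2)) =O[𝓟 (Set.Icc 0 1)]
      fun δ => δ ^ 4 := by
  have ha := expNegPrimitive_sub_quadratic_isBigO θ
  have hb := expNeg_sub_linear_isBigO θ
  have hp : (fun s => s - θ * s ^ 2 / 2) =O[𝓟 (Set.Icc 0 1)] fun s => s ^ 1 :=
    ((by fun_prop : Continuous fun s : ℝ => 1 - θ * s / 2).isBigO_pow_mul 1).congr_left
      fun s => by ring
  have hrem := (continuous_const (y := θ ^ 2 / 2)).isBigO_pow_mul 3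
  have hintegrand := ((ha.mul_pow_add (expNeg_isBigO θ)).add
    ((hp.mul_pow_add hb).add hrem)).congr_left
      (f₂ := fun s => expNegPrimitive θ s * Real.exp (-(θ * s)) - (s - 3 * θ / 2 * s ^ 2))
      fun s => by ring
  exact isBigO_integral_sub (g := fun s => expNegPrimitive θ s * Real.exp (-(θ * s)))
    (by fun_prop) (by fun_prop)
    (fun δ => by
      convert integral_mul_pow_sub_mul_pow 1 (3 * θ / 2) δ 1 2 using 1 <;> norm_num; ring)
    hintegrand

theorem ouGram_one_one_isBigO :
    (fun δ => ouGram θ δ 1 1 - (δ - θ * δ ^ 2)) =O[𝓟 (Set.Icc 0 1)] fun δ => δ ^ 3 := by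
  have hb := expNeg_sub_linear_isBigO θ
  have hl : (fun s => 1 - θ * s) =O[𝓟 (Set.Icc 0 1)] fun s => s ^ 0 :=
    ((by fun_prop : Continuous fun s : ℝ => 1 - θ * s).isBigO_pow_mul 0).congr_left
      fun s => by ring
  have hrem := (continuous_const (y := θ ^ 2)).isBigO_pow_mul 2
  have hintegrand := ((hb.mul_pow_add (expNeg_isBigO θ)).add
    ((hl.mul_pow_add hb).add hrem)).congr_left
      (f₂ := fun s => Real.exp (-(θ * s)) * Real.exp (-(θ * s)) - (1 - 2 * θ * s))
      fun s => by ring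
  exact isBigO_integral_sub (g := fun s => Real.exp (-(θ * s)) * Real.exp (-(θ * s)))
    (by fun_prop) (by fun_prop)
    (fun δ => by
      convert integral_mul_pow_sub_mul_pow 1 (2 * θ) δ 0 1 using 1 <;> norm_num; ring)
    hintegrand

end Expansions

theorem ouGram_one_zero (θ δ : ℝ) : ouGram θ δ 1 0 = ouGram θ δ 0 1 := by
  simp only [ouGram, of_apply, mul_comm]

theorem exp_neg_abs_sq_mul_le_ouGram_one_one (θ : ℝ) {δ : ℝ} (hδ0 : 0 ≤ δ) (hδ1 : δ ≤ 1) :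
    Real.exp (-|θ|) ^ 2 * δ ≤ ouGram θ δ 1 1 := by
  have hpoint : ∀ s ∈ Set.Icc 0 δ,
      Real.exp (-|θ|) ^ 2 ≤ Real.exp (-(θ * s)) * Real.exp (-(θ * s)) := fun s ⟨hs0, hsδ⟩ => by
    have hθs : θ * s ≤ |θ| := by
      calc θ * s ≤ |θ| * s := by gcongr; exact le_abs_self θ
        _ ≤ |θ| := mul_le_of_le_one_right (abs_nonneg θ) (hsδ.trans hδ1)
    rw [sq]
    gcongr
  calc Real.exp (-|θ|) ^ 2 * δ = ∫ _ in (0:ℝ)..δ, Real.exp (-|θ|) ^ 2 := by simp [mul_comm]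
    _ ≤ ouGram θ δ 1 1 := intervalIntegral.integral_mono_on hδ0 intervalIntegrable_const
        ((by fun_prop : Continuous fun s => Real.exp (-(θ * s)) * Real.exp (-(θ * s)))
          |>.intervalIntegrable _ _) hpoint

theorem inv_ouGram_one_one_isBigO (θ : ℝ) :
    (fun δ => (ouGram θ δ 1 1)⁻¹) =O[𝓟 (Set.Ioc 0 1)] fun δ => δ⁻¹ := by
  refine isBigO_principal.mpr ⟨(Real.exp (-|θ|) ^ 2)⁻¹, fun δ ⟨hδ0, hδ1⟩ => ?_⟩
  have hlow := exp_neg_abs_sq_mul_le_ouGram_one_one θ hδ0.le hδ1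
  have hm : 0 < Real.exp (-|θ|) ^ 2 * δ := by positivity
  rw [norm_inv, norm_inv, Real.norm_of_nonneg (hm.le.trans hlow), Real.norm_of_nonneg hδ0.le,
    ← mul_inv]
  exact inv_anti₀ hm hlow

theorem schurCompl_ouGram_isBigO (θ : ℝ) :
    (fun δ => schurCompl (ouGram θ δ) - δ ^ 3 / 12) =O[𝓟 (Set.Ioc 0 1)] fun δ => δ ^ 5 := by
  have hIoc : 𝓟 (Set.Ioc (0:ℝ) 1) ≤ 𝓟 (Set.Icc 0 1) :=
    principal_mono.mpr Set.Ioc_subset_Icc_self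
  have h00 := ouGram_zero_zero_isBigO θ
  have h01 := ouGram_zero_one_isBigO θ
  have h11 := ouGram_one_one_isBigO θ
  have hP01 : (fun δ => δ ^ 2 / 2 - θ * δ ^ 3 / 2) =O[𝓟 (Set.Icc 0 1)] fun δ => δ ^ 2 :=
    ((by fun_prop : Continuous fun δ : ℝ => 1 / 2 - θ * δ / 2).isBigO_pow_mul 2).congr_left
      fun δ => by ring
  have hQ : (fun δ => δ ^ 3 / 4 - θ * δ ^ 4 / 4) =O[𝓟 (Set.Icc 0 1)] fun δ => δ ^ 3 :=
    ((by fun_prop : Continuous fun δ : ℝ => 1 / 4 - θ * δ / 4).isBigO_pow_mul 3).congr_left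
      fun δ => by ring
  have hsum : (fun δ => ouGram θ δ 0 1 + (δ ^ 2 / 2 - θ * δ ^ 3 / 2)) =O[𝓟 (Set.Icc 0 1)]
      fun δ => δ ^ 2 :=
    ((h01.trans (isBigO_pow_of_le (by norm_num))).add (hP01.const_mul_left 2)).congr_left
      fun δ => by ring
  -- Since `(δ²/2 - θδ³/2)² = (δ³/4 - θδ⁴/4)(δ - θδ²)`, the leading terms of `G₀₁²/G₁₁` reduce
  -- exactly to `δ³/4 - θδ⁴/4`, leaving these two corrections of order `δ⁵`.
  have hgain := ((h01.mul_pow_add hsum).mono hIoc).mul (inv_ouGram_one_one_isBigO θ)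
  have hvar := ((hQ.mul_pow_add h11).mono hIoc).mul (inv_ouGram_one_one_isBigO θ)
  have hcorrection := (hgain.sub hvar).congr_right (g₂ := fun δ => δ ^ 5) fun δ => by
    rcases eq_or_ne δ 0 with rfl | hδ
    · simp
    · field_simp
  refine ((h00.mono hIoc).sub hcorrection).congr'
    (eventuallyEq_principal.mpr fun δ ⟨hδ0, hδ1⟩ => ?_) .rfl
  have hpos : 0 < ouGram θ δ 1 1 :=
    lt_of_lt_of_le (by positivity) (exp_neg_abs_sq_mul_le_ouGram_one_one θ hδ0.le hδ1)
  simp only [schurCompl, ouGram_one_zero]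
  field_simp
  ring

theorem mixture_filter_variance_expansion_general (θ η T : ℝ) :
    ∃ C : ℝ, 0 < C ∧ ∀ δ : ℝ, 0 < δ → δ ≤ 1 → ∀ n : ℕ, 1 ≤ n → (n : ℝ) ≤ T / δ →
      |pvar θ η δ n - (n : ℝ) * η ^ 2 * δ ^ 3 / 12| ≤ C * n * δ ^ 5 := by
  obtain ⟨c, hc0, hc⟩ := (schurCompl_ouGram_isBigO θ).exists_pos
  rw [isBigOWith_principal] at hc
  refine ⟨η ^ 2 * c + 1, by positivity, fun δ hδ0 hδ1 n _ _ => ?_⟩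
  have hschur : |schurCompl (ouGram θ δ) - δ ^ 3 / 12| ≤ c * δ ^ 5 := by
    simpa [abs_of_pos hδ0] using hc δ ⟨hδ0, hδ1⟩
  calc |pvar θ η δ n - n * η ^ 2 * δ ^ 3 / 12|
      = n * η ^ 2 * |schurCompl (ouGram θ δ) - δ ^ 3 / 12| := by
        rw [pvar_eq, show ∀ S : ℝ, n * (η ^ 2 * S) - n * η ^ 2 * δ ^ 3 / 12 =
          n * η ^ 2 * (S - δ ^ 3 / 12) from fun S => by ring, abs_mul,
          abs_of_nonneg (by positivity)]
    _ ≤ n * η ^ 2 * (c * δ ^ 5) := by gcongr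
    _ ≤ (η ^ 2 * c + 1) * n * δ ^ 5 := by
        have : 0 ≤ (n : ℝ) * δ ^ 5 := by positivity
        nlinarith

/-- The EKF0 variance recursion of the Gaussian mixture SDE filter satisfies
`p_n = n·η²·δ³/12 + O(n·δ⁵)`, with a constant depending only on `θ`, `η` and `T`. -/
theorem mixture_filter_variance_expansion (θ η T : ℝ) (hθ : 0 ≤ θ) (hη : 0 < η) (hT : 0 < T) :
    ∃ C : ℝ, 0 < C ∧ ∀ δ : ℝ, 0 < δ → δ ≤ 1 → ∀ n : ℕ, 1 ≤ n → (n : ℝ) ≤ T / δ →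
      |pvar θ η δ n - (n : ℝ) * η ^ 2 * δ ^ 3 / 12| ≤ C * n * δ ^ 5 :=
  mixture_filter_variance_expansion_general θ η T
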